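/- Let R be a discrete valuation ring with maximal ideal P = Rp. Every indecomposable pseudo-absorbing primary multiplication R-module is isomorphic to R or to R/P^n for some n ≥ 1. -/

import Mathlib

/-!
In a discrete valuation ring every proper ideal is `0` (prime) or a power `Pⁿ` with `n ≥ 1`
(whose radical is `P`), hence 2-absorbing primary. So the pseudo-absorbing primary
multiplication condition applies to every proper submodule, and `M` is a multiplication
module. Over a local ring a multiplication module is cyclic: if `PM = M`, each `Rx = IM`
satisfies `P • Rx = I • PM = Rx`, so `Rx = 0` by Nakayama; otherwise any `x ∉ PM` generates,
because `Rx = IM` with `I ≤ P` would put `x` in `PM`. Finally a nonzero cyclic module over a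
DVR is `R / torsionOf x`, i.e. `R` or `R/Pⁿ` with `n ≥ 1`.
-/

/-- A proper ideal `I` is 2-absorbing primary if `a*b*c ∈ I` implies
`a*b ∈ I` or `a*c ∈ √I` or `b*c ∈ √I`. -/
def IsTwoAbsPrimary {R : Type*} [CommRing R] (I : Ideal R) : Prop :=
  I ≠ ⊤ ∧ ∀ a b c : R, a * b * c ∈ I → a * b ∈ I ∨ a * c ∈ I.radical ∨ b * c ∈ I.radical

/-- A proper submodule `N` of `M` is pseudo-absorbing primary if `(N :_R M)`
is a 2-absorbing primary ideal of `R`. -/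
def IsPseudoAbsPrimary {R M : Type*} [CommRing R] [AddCommGroup M] [Module R M]
    (N : Submodule R M) : Prop :=
  N ≠ ⊤ ∧ IsTwoAbsPrimary (N.colon ⊤)

/-- `M` is a pseudo-absorbing primary multiplication module if every
pseudo-absorbing primary submodule `N` satisfies `N = I • M` for some ideal `I`. -/
def IsPAPMultiplication (R M : Type*) [CommRing R] [AddCommGroup M] [Module R M] : Prop :=
  ∀ N : Submodule R M, IsPseudoAbsPrimary N → ∃ I : Ideal R, N = I • (⊤ : Submodule R M)

open IsLocalRing Submodule

section TwoAbsPrimary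

variable {R : Type*} [CommRing R]

theorem Ideal.IsPrime.isTwoAbsPrimary {I : Ideal R} (hI : I.IsPrime) : IsTwoAbsPrimary I := by
  refine ⟨hI.ne_top, fun a b c habc => ?_⟩
  rcases hI.mem_or_mem habc with hab | hc
  · exact Or.inl hab
  · exact Or.inr (Or.inr (I.le_radical (I.mul_mem_left b hc)))

theorem isTwoAbsPrimary_of_radical_eq_maximalIdeal [IsLocalRing R] {I : Ideal R}
    (hI : I.radical = maximalIdeal R) : IsTwoAbsPrimary I := by
  have hI_ne_top : I ≠ ⊤ := fun h =>
    (maximalIdeal.isMaximal R).ne_top (by rw [← hI, h, Ideal.radical_top])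
  refine ⟨hI_ne_top, fun a b c habc => ?_⟩
  by_cases ha : IsUnit a
  · obtain ⟨u, rfl⟩ := ha
    refine Or.inr (Or.inr (I.le_radical ?_))
    simpa [← mul_assoc] using I.mul_mem_left (↑u⁻¹ : R) habc
  · exact Or.inr (Or.inl (hI ▸ Ideal.mul_mem_right c _ ((mem_maximalIdeal a).mpr ha)))

end TwoAbsPrimary

namespace IsLocalRing

variable {R M : Type*} [CommRing R] [IsLocalRing R] [AddCommGroup M] [Module R M]

theorem eq_bot_of_fg_of_eq_smul_top
    (hPM : maximalIdeal R • (⊤ : Submodule R M) = ⊤) {N : Submodule R M} (hN : N.FG)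
    {I : Ideal R} (hNI : N = I • ⊤) : N = ⊥ := by
  have hPN : maximalIdeal R • N = N := by
    rw [hNI, ← Submodule.smul_assoc, Ideal.smul_eq_mul, mul_comm, ← Ideal.smul_eq_mul,
      Submodule.smul_assoc, hPM]
  exact eq_bot_of_le_smul_of_le_jacobson_bot _ N hN hPN.ge (maximalIdeal_le_jacobson ⊥)

theorem exists_span_singleton_eq_top_of_forall_eq_smul_top
    (hM : ∀ N : Submodule R M, ∃ I : Ideal R, N = I • ⊤) : ∃ x : M, span R {x} = ⊤ := by
  by_cases hPM : maximalIdeal R • (⊤ : Submodule R M) = ⊤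
  · have : Subsingleton M := subsingleton_iff_forall_eq 0 |>.mpr fun y => by
      obtain ⟨I, hI⟩ := hM (span R {y})
      exact span_singleton_eq_bot.mp
        (eq_bot_of_fg_of_eq_smul_top hPM (fg_span_singleton y) hI)
    exact ⟨0, Subsingleton.elim _ _⟩
  obtain ⟨x, -, hx⟩ := SetLike.exists_of_lt (lt_top_iff_ne_top.mpr hPM)
  obtain ⟨I, hI⟩ := hM (span R {x})
  refine ⟨x, ?_⟩
  by_cases hI_top : I = ⊤
  · rw [hI, hI_top, top_smul]
  · refine absurd (?_ : x ∈ maximalIdeal R • ⊤) hx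
    exact smul_mono_left (le_maximalIdeal hI_top) (hI ▸ mem_span_singleton_self x)

end IsLocalRing

namespace IsDiscreteValuationRing

variable {R : Type*} [CommRing R] [IsDomain R] [IsDiscreteValuationRing R]

theorem eq_bot_or_eq_maximalIdeal_pow {I : Ideal R} (hI : I ≠ ⊤) :
    I = ⊥ ∨ ∃ n : ℕ, 1 ≤ n ∧ I = IsLocalRing.maximalIdeal R ^ n := by
  refine or_iff_not_imp_left.mpr fun hI_ne_bot => ?_
  obtain ⟨n, rfl⟩ := exists_maximalIdeal_pow_eq_of_principal R
    (IsPrincipalIdealRing.principal _) I hI_ne_bot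
  refine ⟨n, Nat.one_le_iff_ne_zero.mpr ?_, rfl⟩
  rintro rfl
  exact hI (by rw [pow_zero, Ideal.one_eq_top])

theorem isTwoAbsPrimary {I : Ideal R} (hI : I ≠ ⊤) : IsTwoAbsPrimary I := by
  rcases eq_bot_or_eq_maximalIdeal_pow hI with rfl | ⟨n, hn, rfl⟩
  · exact Ideal.isPrime_bot.isTwoAbsPrimary
  · apply isTwoAbsPrimary_of_radical_eq_maximalIdeal
    rw [Ideal.radical_pow _ (Nat.one_le_iff_ne_zero.mp hn),
      (IsLocalRing.maximalIdeal.isMaximal R).isPrime.radical]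

variable {M : Type*} [AddCommGroup M] [Module R M]

theorem nonempty_linearEquiv_of_span_singleton_eq_top [Nontrivial M] {x : M}
    (hx : span R {x} = ⊤) :
    Nonempty (M ≃ₗ[R] R) ∨
      ∃ n : ℕ, 1 ≤ n ∧ Nonempty (M ≃ₗ[R] R ⧸ (IsLocalRing.maximalIdeal R ^ n : Ideal R)) := by
  let e : M ≃ₗ[R] R ⧸ Ideal.torsionOf R M x :=
    ((Ideal.quotTorsionOfEquivSpanSingleton R M x).trans
      ((LinearEquiv.ofEq _ _ hx).trans topEquiv)).symm
  have hx0 : x ≠ 0 := by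
    rintro rfl
    rw [span_singleton_eq_bot.mpr rfl] at hx
    exact bot_ne_top hx
  rcases eq_bot_or_eq_maximalIdeal_pow ((Ideal.torsionOf_eq_top_iff R x).not.mpr hx0) with
    h | ⟨n, hn, h⟩
  · exact Or.inl ⟨e.trans (quotEquivOfEqBot _ h)⟩
  · exact Or.inr ⟨n, hn, ⟨e.trans (quotEquivOfEq _ _ h)⟩⟩

end IsDiscreteValuationRing

theorem IsPAPMultiplication.exists_eq_smul_top {R M : Type*} [CommRing R] [IsDomain R]
    [IsDiscreteValuationRing R] [AddCommGroup M] [Module R M] (hM : IsPAPMultiplication R M)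
    (N : Submodule R M) : ∃ I : Ideal R, N = I • ⊤ := by
  by_cases hN : N = ⊤
  · exact ⟨⊤, by rw [hN, top_smul]⟩
  have hcolon : N.colon ⊤ ≠ ⊤ := by
    rwa [Ne, colon_eq_top_iff_subset, Set.top_eq_univ, Set.univ_subset_iff, coe_eq_univ]
  exact hM N ⟨hN, IsDiscreteValuationRing.isTwoAbsPrimary hcolon⟩

theorem stmt_10_general {R M : Type*} [CommRing R] [IsDomain R] [IsDiscreteValuationRing R]
    [AddCommGroup M] [Module R M] [Nontrivial M]
    (hM : IsPAPMultiplication R M) :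
    Nonempty (M ≃ₗ[R] R) ∨
    ∃ n : ℕ, 1 ≤ n ∧
      Nonempty (M ≃ₗ[R] R ⧸ (IsLocalRing.maximalIdeal R ^ n : Ideal R)) := by
  obtain ⟨x, hx⟩ :=
    IsLocalRing.exists_span_singleton_eq_top_of_forall_eq_smul_top hM.exists_eq_smul_top
  exact IsDiscreteValuationRing.nonempty_linearEquiv_of_span_singleton_eq_top hx

/-- Over a DVR R with maximal ideal P, every indecomposable pseudo-absorbing
primary multiplication R-module is isomorphic to R or to R/Pⁿ for some n ≥ 1. -/
theorem stmt_10 {R M : Type*} [CommRing R] [IsDomain R] [IsDiscreteValuationRing R]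
    [AddCommGroup M] [Module R M] [Nontrivial M]
    (hind : ∀ N N' : Submodule R M, IsCompl N N' → N = ⊥ ∨ N = ⊤)
    (hM : IsPAPMultiplication R M) :
    Nonempty (M ≃ₗ[R] R) ∨
    ∃ n : ℕ, 1 ≤ n ∧
      Nonempty (M ≃ₗ[R] R ⧸ (IsLocalRing.maximalIdeal R ^ n : Ideal R)) :=
  stmt_10_general hM
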